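/- Lipschitz stability of the line-integral functional along nearby reverse-flow curves (key estimate (C.3) in the proof of Proposition 3.7): under the setting, (A2), (A4), the diffeomorphism assumption and the kernel assumptions, fix x ∈ E, ρ > 0 small enough that 𝕋_{x,ρ} ⊆ E, n ≥ 1, and arbitrary fixed data (z_i,s_{i+1})_{0≤i<n} ∈ Fⁿ, and let Ĝⁿ(ξ,t) = n^{−1} Σ_{i=0}^{n−1} v_i^{−d} K_d((z_i−ξ)/v_i) 1{s_{i+1} > t}. Then there exists a constant c ≥ 0 (depending on n, the data, and the Lipschitz and boundedness constants, but not on y) such that for every y ∈ D_{x,ρ}: | ∫_{C_y} Ĝⁿ(ξ,θ_y(ξ)) G(ξ,θ_y(ξ)) ν∞(ξ) dξ − ∫_{C_x} Ĝⁿ(ξ,τ_x(ξ)) G(ξ,τ_x(ξ)) ν∞(ξ) dξ | ≤ c |x − y|. -/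

import Mathlib

open MeasureTheory ProbabilityTheory Filter Set Real Asymptotics
open scoped ENNReal NNReal Classical Topology

noncomputable section

/-- The Euclidean state space `ℝ^d`. -/
abbrev Rd (d : ℕ) := EuclideanSpace ℝ (Fin d)

variable {d : ℕ}

/-- Deterministic exit time `t⁺(x) = inf {t > 0 : Φ(x,t) ∈ ∂E}`, with value in `ℝ≥0∞`
(`⊤` when the flow never reaches the boundary). -/
def tplus (Φ : Rd d → ℝ → Rd d) (E : Set (Rd d)) (x : Rd d) : ℝ≥0∞ :=
  ⨅ t : {t : ℝ // 0 < t ∧ Φ x t ∈ frontier E}, ENNReal.ofReal t.1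

/-- Deterministic exit time of the reverse flow `t⁻(x) = inf {t > 0 : Φ(x,−t) ∈ ∂E}`,
real-valued. -/
def tminusR (Φ : Rd d → ℝ → Rd d) (E : Set (Rd d)) (x : Rd d) : ℝ :=
  sInf {t : ℝ | 0 < t ∧ Φ x (-t) ∈ frontier E}

/-- Conditional survival function `G(x,t) = exp(−∫₀ᵗ λ(Φ(x,s)) ds)`. -/
def Gfun (Φ : Rd d → ℝ → Rd d) (lam : Rd d → ℝ) (x : Rd d) (t : ℝ) : ℝ :=
  Real.exp (-(∫ s in (0:ℝ)..t, lam (Φ x s)))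

/-- Conditional density `f(x,t) = λ(Φ(x,t)) G(x,t)`. -/
def ffun (Φ : Rd d → ℝ → Rd d) (lam : Rd d → ℝ) (x : Rd d) (t : ℝ) : ℝ :=
  lam (Φ x t) * Gfun Φ lam x t

/-- The state space `F = ∪_{x ∈ E} {x} × [0, t⁺(x)]` of the chain `(Z_n, S_{n+1})`. -/
def Fset (Φ : Rd d → ℝ → Rd d) (E : Set (Rd d)) : Set (Rd d × ℝ) :=
  {p | p.1 ∈ E ∧ 0 ≤ p.2 ∧ ENNReal.ofReal p.2 ≤ tplus Φ E p.1}

/-- Bandwidth `v_k = v₀ (k+1)^{-α}`. -/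
def vband (v0 α : ℝ) (k : ℕ) : ℝ := v0 * ((k : ℝ) + 1) ^ (-α)

/-- Bandwidth `w_k = w₀ (k+1)^{-β}`. -/
def wband (w0 β : ℝ) (k : ℕ) : ℝ := w0 * ((k : ℝ) + 1) ^ (-β)

/-- The measure with density `Q(y, ·)` with respect to Lebesgue measure. -/
def Qmeas (Q : Rd d → Rd d → ℝ) (y : Rd d) : Measure (Rd d) :=
  volume.withDensity fun ξ => ENNReal.ofReal (Q y ξ)

/-- The measure with density `ν∞`. -/
def numeas (nu : Rd d → ℝ) : Measure (Rd d) :=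
  volume.withDensity fun y => ENNReal.ofReal (nu y)

/-- Transition kernel `P(x,·) = ∫ S(x,dt) Q(Φ(x,t),·)` of the post-jump chain. -/
def Pker (Φ : Rd d → ℝ → Rd d) (Q : Rd d → Rd d → ℝ) (S : Rd d → Measure ℝ)
    (x : Rd d) : Measure (Rd d) :=
  (S x).bind fun t => Qmeas Q (Φ x t)

/-- Transition kernel `R((x,t), A×B) = ∫_A Q(Φ(x,t),ξ) S(ξ,B) dξ` of `(Z_n, S_{n+1})`. -/
def Rker (Φ : Rd d → ℝ → Rd d) (Q : Rd d → Rd d → ℝ) (S : Rd d → Measure ℝ)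
    (p : Rd d × ℝ) : Measure (Rd d × ℝ) :=
  (Qmeas Q (Φ p.1 p.2)).bind fun ξ => (S ξ).map fun u => (ξ, u)

/-- `n`-step iterate of a transition kernel applied to an initial distribution. -/
def iterKer {A : Type*} [MeasurableSpace A] (P : A → Measure A) : ℕ → Measure A → Measure A
  | 0, μ => μ
  | n + 1, μ => (iterKer P n μ).bind P

/-- Total-variation distance between two (finite) measures. -/
def tvDist {A : Type*} [MeasurableSpace A] (μ ν : Measure A) : ℝ :=
  ⨆ B : {B : Set A // MeasurableSet B}, |(μ B.1).toReal - (ν B.1).toReal|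

/-- Specification of the conditional inter-jump-time kernel `S(x,·)`:
a probability measure with `S(x,(t,∞)) = G(x,t)` for `t < t⁺(x)` and `0` afterwards. -/
def SKernelSpec (Φ : Rd d → ℝ → Rd d) (lam : Rd d → ℝ) (E : Set (Rd d))
    (S : Rd d → Measure ℝ) : Prop :=
  (∀ x ∈ E, IsProbabilityMeasure (S x)) ∧
  (∀ B : Set ℝ, MeasurableSet B → Measurable fun x => S x B) ∧
  (∀ x ∈ E, ∀ t : ℝ, 0 ≤ t →
    (ENNReal.ofReal t < tplus Φ E x → S x (Ioi t) = ENNReal.ofReal (Gfun Φ lam x t)) ∧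
    (tplus Φ E x ≤ ENNReal.ofReal t → S x (Ioi t) = 0))

/-- `(Z_n, S_{n+1})_{n≥0}` is a Markov chain with transition kernel `R` with respect to
the filtration `𝓕`. -/
def IsMarkovR {Ω : Type*} {mΩ : MeasurableSpace Ω} (Pr : Measure Ω) (𝓕 : Filtration ℕ mΩ)
    (Φ : Rd d → ℝ → Rd d) (Q : Rd d → Rd d → ℝ) (S : Rd d → Measure ℝ)
    (Z : ℕ → Ω → Rd d) (Snext : ℕ → Ω → ℝ) : Prop :=
  ∀ (n : ℕ) (g : Rd d × ℝ → ℝ), Measurable g → (∃ C, ∀ p, |g p| ≤ C) →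
    (Pr[(fun ω => g (Z (n + 1) ω, Snext (n + 1) ω)) | 𝓕 n]) =ᵐ[Pr]
      fun ω => ∫ ξ, (∫ u, g (ξ, u) ∂(S ξ)) * Q (Φ (Z n ω) (Snext n ω)) ξ

/-- The basic setting: a PDMP with characteristics `(λ, Q, Φ)` on the open set `E`, and
the Markov chain `(Z_n, S_{n+1})_{n≥0}` of its post-jump locations and inter-jump times,
adapted to the filtration `𝓕` of the probability space `(Ω, Pr)`. -/
structure BaseSetting {Ω : Type*} {mΩ : MeasurableSpace Ω} (Pr : Measure Ω)
    (𝓕 : Filtration ℕ mΩ) (E : Set (Rd d)) (Φ : Rd d → ℝ → Rd d)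
    (lam : Rd d → ℝ) (Q : Rd d → Rd d → ℝ) (S : Rd d → Measure ℝ)
    (Z : ℕ → Ω → Rd d) (Snext : ℕ → Ω → ℝ) : Prop where
  prob : IsProbabilityMeasure Pr
  E_open : IsOpen E
  flow_add : ∀ (x : Rd d) (t u : ℝ), Φ x (t + u) = Φ (Φ x t) u
  flow_zero : ∀ x, Φ x 0 = x
  flow_meas : Measurable (Function.uncurry Φ)
  lam_nonneg : ∀ x, 0 ≤ lam x
  lam_meas : Measurable lam
  lam_locint : ∀ x ∈ E, ∃ ε : ℝ, 0 < ε ∧ IntervalIntegrable (fun u => lam (Φ x u)) volume 0 ε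
  Q_meas : Measurable (Function.uncurry Q)
  Q_nonneg : ∀ x y, 0 ≤ Q x y
  Q_one : ∀ x ∈ closure E, Qmeas Q x (E \ {x}) = 1
  S_spec : SKernelSpec Φ lam E S
  Z_meas : ∀ n, Measurable (Z n)
  Snext_meas : ∀ n, Measurable (Snext n)
  adapted : ∀ n : ℕ, ∀ i ≤ n, Measurable[𝓕 n] (Z i) ∧ Measurable[𝓕 n] (Snext i)
  markov : IsMarkovR Pr 𝓕 Φ Q S Z Snext
  chain_mem : ∀ n, ∀ᵐ ω ∂Pr, (Z n ω, Snext n ω) ∈ Fset Φ E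

/-- Assumption (A1): `ν∞` is a probability density on `E` and the laws of the post-jump
chain converge in total variation to `ν∞` from every deterministic start in `E`. -/
def ErgodicA1 (Φ : Rd d → ℝ → Rd d) (Q : Rd d → Rd d → ℝ) (S : Rd d → Measure ℝ)
    (E : Set (Rd d)) (nu : Rd d → ℝ) : Prop :=
  (∀ y, 0 ≤ nu y) ∧ Measurable nu ∧ IsProbabilityMeasure (numeas nu) ∧
    numeas nu Eᶜ = 0 ∧
    ∀ x ∈ E, Tendsto
      (fun n => tvDist (iterKer (Pker Φ Q S) n (Measure.dirac x)) (numeas nu))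
      atTop (𝓝 0)

/-- Assumptions (A2): regularity of `Q`, `f`, `G` and `t⁺`. -/
structure RegularityA2 (Φ : Rd d → ℝ → Rd d) (lam : Rd d → ℝ) (Q : Rd d → Rd d → ℝ)
    (E : Set (Rd d)) : Prop where
  Q_bdd : ∃ C, ∀ x y, Q x y ≤ C
  f_bdd : ∃ C, ∀ x ∈ E, ∀ t : ℝ, 0 < t → ENNReal.ofReal t < tplus Φ E x →
    ffun Φ lam x t ≤ C
  f_lip : ∃ L, 0 ≤ L ∧ ∀ x ∈ E, ∀ y ∈ E, ∀ s t : ℝ, 0 < s → s < t →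
    ENNReal.ofReal t < min (tplus Φ E x) (tplus Φ E y) →
    |ffun Φ lam x t - ffun Φ lam y s| ≤ L * (|t - s| + ‖y - x‖)
  Q_lip : ∃ L, 0 ≤ L ∧ ∀ x ∈ closure E, ∀ y z : Rd d, |Q x y - Q x z| ≤ L * ‖y - z‖
  G_lip : ∃ L, 0 ≤ L ∧ ∀ x ∈ E, ∀ y ∈ E, ∀ t : ℝ, 0 < t →
    ENNReal.ofReal t < min (tplus Φ E x) (tplus Φ E y) →
    |Gfun Φ lam x t - Gfun Φ lam y t| ≤ L * ‖x - y‖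
  tplus_cont : ContinuousOn (tplus Φ E) E

/-- Assumptions (A3): contraction of the kernel `P` and Hölder-type regularity of
`(x,t,y) ↦ Q(Φ(x,t),y)` (the class `Li(r₁,r₂)`). -/
def MixingA3 (Φ : Rd d → ℝ → Rd d) (Q : Rd d → Rd d → ℝ) (S : Rd d → Measure ℝ)
    (E : Set (Rd d)) : Prop :=
  ∃ a₁ a₂ : ℝ, 1 ≤ a₁ ∧ 0 ≤ a₂ ∧ a₂ < 1 ∧
    (∀ x ∈ E, ∀ y ∈ E,
      (∫⁻ u, ∫⁻ v, ENNReal.ofReal (‖u - v‖ ^ a₁) ∂(Pker Φ Q S y) ∂(Pker Φ Q S x)) ≤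
        ENNReal.ofReal (a₂ * ‖x - y‖ ^ a₁)) ∧
    ∃ r₁ r₂ c : ℝ, 0 < r₁ ∧ 0 < r₂ ∧ 2 * (r₁ + r₂) ≤ a₁ ∧ 0 ≤ c ∧
      ∀ (x₁ x₂ : Rd d) (t₁ t₂ : ℝ) (y₁ y₂ : Rd d),
        |Q (Φ x₁ t₁) y₁ - Q (Φ x₂ t₂) y₂| ≤
          c * ‖((x₁, t₁, y₁) : Rd d × ℝ × Rd d) - (x₂, t₂, y₂)‖ ^ r₂ *
            (‖((x₁, t₁, y₁) : Rd d × ℝ × Rd d)‖ ^ r₁ +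
              ‖((x₂, t₂, y₂) : Rd d × ℝ × Rd d)‖ ^ r₁ + 1)

/-- Kernel assumptions on `K_d` and `K_1`: nonnegative, bounded, measurable, integrating to
one, supported in the ball of radius `δ`, with `K_d` Lipschitz. -/
structure KernelPair (Kd : Rd d → ℝ) (K1 : ℝ → ℝ) (δ : ℝ) : Prop where
  δ_pos : 0 < δ
  d_nonneg : ∀ u, 0 ≤ Kd u
  d_meas : Measurable Kd
  d_bdd : ∃ C, ∀ u, Kd u ≤ C
  d_int : (∫ u, Kd u) = 1
  d_supp : Function.support Kd ⊆ Metric.ball 0 δ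
  d_lip : ∃ L, 0 ≤ L ∧ ∀ u v, |Kd u - Kd v| ≤ L * ‖u - v‖
  one_nonneg : ∀ u, 0 ≤ K1 u
  one_meas : Measurable K1
  one_bdd : ∃ C, ∀ u, K1 u ≤ C
  one_int : (∫ u, K1 u) = 1
  one_supp : Function.support K1 ⊆ Metric.ball 0 δ

/-- `τ_d² = ∫ K_d²`. -/
def taud2 (Kd : Rd d → ℝ) : ℝ := ∫ u, Kd u ^ 2

/-- `τ₁² = ∫ K₁²`. -/
def tau12 (K1 : ℝ → ℝ) : ℝ := ∫ u, K1 u ^ 2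

/-- Condition (C0) at `(x,t)`: `t + w₀δ < inf {t⁺(ξ) : ξ ∈ B(x, v₀δ)}`. -/
def C0cond (Φ : Rd d → ℝ → Rd d) (E : Set (Rd d)) (v0 w0 δ : ℝ) (x : Rd d) (t : ℝ) : Prop :=
  ENNReal.ofReal (t + w0 * δ) < ⨅ ξ ∈ Metric.ball x (v0 * δ), tplus Φ E ξ

/-- The admissible set `𝒜` of bandwidth exponents. -/
def AdmissibleAB (d : ℕ) (α β : ℝ) : Prop :=
  0 < α ∧ 0 < β ∧ α * d + β < 1 ∧ 1 < α * d + β + 2 * min α β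

variable {Ω : Type*}

/-- The kernel estimator `F̂ⁿ(x,t)`. -/
def Fhat (Kd : Rd d → ℝ) (K1 : ℝ → ℝ) (v0 w0 α β : ℝ) (Z : ℕ → Ω → Rd d)
    (Snext : ℕ → Ω → ℝ) (n : ℕ) (x : Rd d) (t : ℝ) (ω : Ω) : ℝ :=
  (n : ℝ)⁻¹ * ∑ i ∈ Finset.range n,
    (vband v0 α i ^ d)⁻¹ * (wband w0 β i)⁻¹ * Kd ((vband v0 α i)⁻¹ • (Z i ω - x)) *
      K1 ((Snext i ω - t) / wband w0 β i)

/-- The kernel estimator `Ĝⁿ(x,t)`. -/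
def Ghat (Kd : Rd d → ℝ) (v0 α : ℝ) (Z : ℕ → Ω → Rd d) (Snext : ℕ → Ω → ℝ)
    (n : ℕ) (x : Rd d) (t : ℝ) (ω : Ω) : ℝ :=
  (n : ℝ)⁻¹ * ∑ i ∈ Finset.range n,
    (vband v0 α i ^ d)⁻¹ * Kd ((vband v0 α i)⁻¹ • (Z i ω - x)) *
      (if t < Snext i ω then 1 else 0)

/-- The kernel estimator `ν̂ⁿ(x)`. -/
def nuhat (Kd : Rd d → ℝ) (v0 α : ℝ) (Z : ℕ → Ω → Rd d) (n : ℕ) (x : Rd d) (ω : Ω) : ℝ :=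
  (n : ℝ)⁻¹ * ∑ i ∈ Finset.range n,
    (vband v0 α i ^ d)⁻¹ * Kd ((vband v0 α i)⁻¹ • (Z i ω - x))

/-- Convergence in distribution of a sequence of random variables to the law `μ`,
tested against bounded continuous functions. -/
def TendstoInDistribution {Ω : Type*} {mΩ : MeasurableSpace Ω} (Pr : Measure Ω)
    {V : Type*} [TopologicalSpace V] [MeasurableSpace V] (X : ℕ → Ω → V)
    (μ : Measure V) : Prop :=
  ∀ g : BoundedContinuousFunction V ℝ,
    Tendsto (fun n => ∫ ω, g (X n ω) ∂Pr) atTop (𝓝 (∫ v, g v ∂μ))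

/-- The increment `A_j` of the martingale decomposition. -/
def Avec (Kd : Rd d → ℝ) (K1 : ℝ → ℝ) (v0 w0 α β : ℝ) (x : Rd d) (t : ℝ)
    (Z : ℕ → Ω → Rd d) (Snext : ℕ → Ω → ℝ) (j : ℕ) (ω : Ω) : ℝ × ℝ × ℝ :=
  ((vband v0 α j ^ d)⁻¹ * (wband w0 β j)⁻¹ * Kd ((vband v0 α j)⁻¹ • (Z j ω - x)) *
      K1 ((Snext j ω - t) / wband w0 β j),
    (vband v0 α j ^ d)⁻¹ * Kd ((vband v0 α j)⁻¹ • (Z j ω - x)) *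
      (if t < Snext j ω then 1 else 0),
    (vband v0 α j ^ d)⁻¹ * Kd ((vband v0 α j)⁻¹ • (Z j ω - x)))

/-- The compensator `B_j` of the martingale decomposition. -/
def Bvec (Φ : Rd d → ℝ → Rd d) (lam : Rd d → ℝ) (Q : Rd d → Rd d → ℝ)
    (Kd : Rd d → ℝ) (K1 : ℝ → ℝ) (v0 w0 α β : ℝ) (x : Rd d) (t : ℝ)
    (Z : ℕ → Ω → Rd d) (Snext : ℕ → Ω → ℝ) (j : ℕ) (ω : Ω) : ℝ × ℝ × ℝ :=
  (∫ u : Rd d, ∫ v : ℝ,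
      Q (Φ (Z (j - 1) ω) (Snext (j - 1) ω)) (x + vband v0 α j • u) *
        ffun Φ lam (x + vband v0 α j • u) (t + wband w0 β j * v) * Kd u * K1 v,
    ∫ u : Rd d,
      Q (Φ (Z (j - 1) ω) (Snext (j - 1) ω)) (x + vband v0 α j • u) *
        Gfun Φ lam (x + vband v0 α j • u) t * Kd u,
    ∫ u : Rd d,
      Q (Φ (Z (j - 1) ω) (Snext (j - 1) ω)) (x + vband v0 α j • u) * Kd u)

/-- The martingale `M_n = Σ_{j=1}^n (A_j − B_j)`. -/
def Mmart (Φ : Rd d → ℝ → Rd d) (lam : Rd d → ℝ) (Q : Rd d → Rd d → ℝ)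
    (Kd : Rd d → ℝ) (K1 : ℝ → ℝ) (v0 w0 α β : ℝ) (x : Rd d) (t : ℝ)
    (Z : ℕ → Ω → Rd d) (Snext : ℕ → Ω → ℝ) (n : ℕ) (ω : Ω) : ℝ × ℝ × ℝ :=
  ∑ j ∈ Finset.Icc 1 n,
    (Avec Kd K1 v0 w0 α β x t Z Snext j ω - Bvec Φ lam Q Kd K1 v0 w0 α β x t Z Snext j ω)

/-- The remainder term `R_n` of the decomposition
`(F̂ⁿ, Ĝⁿ, ν̂ⁿ) − (ν f, ν G, ν) = M_{n−1}/n + R_n`. -/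
def RnRem (Φ : Rd d → ℝ → Rd d) (lam : Rd d → ℝ) (Q : Rd d → Rd d → ℝ) (nu : Rd d → ℝ)
    (Kd : Rd d → ℝ) (K1 : ℝ → ℝ) (v0 w0 α β : ℝ) (x : Rd d) (t : ℝ)
    (Z : ℕ → Ω → Rd d) (Snext : ℕ → Ω → ℝ) (n : ℕ) (ω : Ω) : ℝ × ℝ × ℝ :=
  (Fhat Kd K1 v0 w0 α β Z Snext n x t ω, Ghat Kd v0 α Z Snext n x t ω,
      nuhat Kd v0 α Z n x ω)
    - (nu x * ffun Φ lam x t, nu x * Gfun Φ lam x t, nu x)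
    - (n : ℝ)⁻¹ • Mmart Φ lam Q Kd K1 v0 w0 α β x t Z Snext (n - 1) ω

/-- The three coordinate projections of `ℝ³`. -/
def comp3 : Fin 3 → ℝ × ℝ × ℝ → ℝ := ![fun p => p.1, fun p => p.2.1, fun p => p.2.2]

/-- Entry of the predictable square variation process
`⟨M⟩_n = Σ_{k=1}^n E[(M_k − M_{k−1})(M_k − M_{k−1})ᵀ | 𝓕_{k−1}]`. -/
def qvEntry {Ω : Type*} {mΩ : MeasurableSpace Ω} (Pr : Measure Ω) (𝓕 : Filtration ℕ mΩ)
    (M : ℕ → Ω → ℝ × ℝ × ℝ) (f g : ℝ × ℝ × ℝ → ℝ) (n : ℕ) (ω : Ω) : ℝ :=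
  ∑ k ∈ Finset.Icc 1 n,
    (Pr[(fun ω' => f (M k ω' - M (k - 1) ω') * g (M k ω' - M (k - 1) ω')) | 𝓕 (k - 1)]) ω

/-- The disc `D_{x,ρ} = B(x,ρ) ∩ ℍ_x`, `ℍ_x` being the hyperplane through `x`
orthogonal to `∇_tΦ(x,0)`. -/
def Dxrho (DΦ : Rd d → ℝ → Rd d) (x : Rd d) (ρ : ℝ) : Set (Rd d) :=
  Metric.ball x ρ ∩ {y | (inner ℝ (y - x) (DΦ x 0) : ℝ) = 0}

/-- The reverse-flow curve `C_x = {Φ(x,−t) : 0 ≤ t < t⁻(x)}`. -/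
def Ccurve (Φ : Rd d → ℝ → Rd d) (E : Set (Rd d)) (x : Rd d) : Set (Rd d) :=
  (fun t => Φ x (-t)) '' Ico 0 (tminusR Φ E x)

/-- The tube `𝕋_{x,ρ} = ∪_{y ∈ D_{x,ρ}} C_y`. -/
def Ttube (Φ : Rd d → ℝ → Rd d) (E : Set (Rd d)) (DΦ : Rd d → ℝ → Rd d)
    (x : Rd d) (ρ : ℝ) : Set (Rd d) :=
  ⋃ y ∈ Dxrho DΦ x ρ, Ccurve Φ E y

/-- Line integral `∫_{C_x} g(ξ, τ_x(ξ)) dξ = ∫₀^{t⁻(x)} g(Φ(x,−t), t) |∇_tΦ(x,−t)| dt`. -/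
def lineIntegral (Φ : Rd d → ℝ → Rd d) (DΦ : Rd d → ℝ → Rd d) (E : Set (Rd d))
    (x : Rd d) (g : Rd d → ℝ → ℝ) : ℝ :=
  ∫ t in (0:ℝ)..tminusR Φ E x, g (Φ x (-t)) t * ‖DΦ x (-t)‖

/-- Assumptions (A4): `ν∞` bounded and Lipschitz, `t⁻` Lipschitz, the flow Lipschitz in
space uniformly in time, `∇_tΦ` bounded and Lipschitz. -/
def RegularityA4 (Φ DΦ : Rd d → ℝ → Rd d) (E : Set (Rd d)) (nu : Rd d → ℝ) : Prop :=
  (∃ C, ∀ y, |nu y| ≤ C) ∧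
  (∃ L, 0 ≤ L ∧ ∀ x y : Rd d, |nu x - nu y| ≤ L * ‖x - y‖) ∧
  (∃ L, 0 ≤ L ∧ ∀ x ∈ E, ∀ y ∈ E, |tminusR Φ E x - tminusR Φ E y| ≤ L * ‖x - y‖) ∧
  (∃ L, 0 ≤ L ∧ ∀ (t : ℝ) (x y : Rd d), ‖Φ x t - Φ y t‖ ≤ L * ‖x - y‖) ∧
  (∃ C, ∀ (x : Rd d) (t : ℝ), ‖DΦ x t‖ ≤ C) ∧
  (∃ L, 0 ≤ L ∧ ∀ (t : ℝ) (x y : Rd d), ‖DΦ x t - DΦ y t‖ ≤ L * ‖x - y‖)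

/-- The reverse flow `t ↦ Φ(ξ,−t)` is a diffeomorphic change of variables. -/
def ReverseFlowDiffeo (Φ DΦ : Rd d → ℝ → Rd d) (E : Set (Rd d)) : Prop :=
  ∀ ξ ∈ E, Function.Injective (fun t : ℝ => Φ ξ (-t)) ∧ ∀ t : ℝ, DΦ ξ t ≠ 0

/-- The estimator `Ĝⁿ` built from fixed (conditioned-upon) data `(z_i, s_{i+1})`. -/
def GhatData (Kd : Rd d → ℝ) (v0 α : ℝ) (z : ℕ → Rd d) (s : ℕ → ℝ)
    (n : ℕ) (ξ : Rd d) (t : ℝ) : ℝ :=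
  (n : ℝ)⁻¹ * ∑ i ∈ Finset.range n,
    (vband v0 α i ^ d)⁻¹ * Kd ((vband v0 α i)⁻¹ • (z i - ξ)) * (if t < s i then 1 else 0)

/-- The estimator `F̂ⁿ` built from fixed (conditioned-upon) data `(z_i, s_{i+1})`. -/
def FhatData (Kd : Rd d → ℝ) (K1 : ℝ → ℝ) (v0 w0 α β : ℝ) (z : ℕ → Rd d) (s : ℕ → ℝ)
    (n : ℕ) (ξ : Rd d) (t : ℝ) : ℝ :=
  (n : ℝ)⁻¹ * ∑ i ∈ Finset.range n,
    (vband v0 α i ^ d)⁻¹ * (wband w0 β i)⁻¹ * Kd ((vband v0 α i)⁻¹ • (z i - ξ)) *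
      K1 ((s i - t) / wband w0 β i)


/-!
Write both line integrals as `∫₀^{t⁻(w)} g(Φ(w,-t), t) |∇ₜΦ(w,-t)| dt`. On the common range
`[0, min (t⁻ x) (t⁻ y)]` the two integrands differ by `O(|x - y|)`: `Ĝⁿ`, `ν∞` and `∇ₜΦ` are
bounded and Lipschitz, `Φ(·,-t)` is Lipschitz, and `G` is Lipschitz by (A2) because at time `t`
the point `Φ(w,-t)` has not yet reached `∂E` along the flow. The two tails have length
`|t⁻ x - t⁻ y| = O(|x - y|)` and a bounded integrand.
-/

lemma abs_mul_sub_mul_le {a b a' b' A B : ℝ} (ha' : |a'| ≤ A) (hb : |b| ≤ B) :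
    |a * b - a' * b'| ≤ |a - a'| * B + A * |b - b'| := by
  calc |a * b - a' * b'| = |(a - a') * b + a' * (b - b')| := by ring_nf
    _ ≤ |a - a'| * |b| + |a'| * |b - b'| := by
        rw [← abs_mul, ← abs_mul]; exact abs_add_le _ _
    _ ≤ |a - a'| * B + A * |b - b'| := by gcongr

lemma abs_intervalIntegral_sub_le {f g : ℝ → ℝ} {a b M L : ℝ} (ha : 0 ≤ a) (hb : 0 ≤ b)
    (hf : IntervalIntegrable f volume 0 a) (hg : IntervalIntegrable g volume 0 b)
    (hfM : ∀ t ∈ Ioc 0 a, |f t| ≤ M) (hgM : ∀ t ∈ Ioc 0 b, |g t| ≤ M)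
    (hfg : ∀ t ∈ Ioo 0 (min a b), |f t - g t| ≤ L) :
    |(∫ t in 0..a, f t) - ∫ t in 0..b, g t| ≤ L * min a b + M * |a - b| := by
  set m := min a b
  have hm : 0 ≤ m := le_min ha hb
  have hma : m ≤ a := min_le_left a b
  have hmb : m ≤ b := min_le_right a b
  have hf₀ : IntervalIntegrable f volume 0 m := hf.mono_set (uIcc_subset_uIcc_left (by
    rw [uIcc_of_le ha]; exact ⟨hm, hma⟩))
  have hg₀ : IntervalIntegrable g volume 0 m := hg.mono_set (uIcc_subset_uIcc_left (by
    rw [uIcc_of_le hb]; exact ⟨hm, hmb⟩))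
  have hsplit : (∫ t in 0..a, f t) - ∫ t in 0..b, g t =
      (∫ t in 0..m, f t - g t) + ((∫ t in m..a, f t) - ∫ t in m..b, g t) := by
    rw [← intervalIntegral.integral_add_adjacent_intervals hf₀ (hf.mono_set (by
        rw [uIcc_of_le hma, uIcc_of_le ha]; exact Icc_subset_Icc_left hm)),
      ← intervalIntegral.integral_add_adjacent_intervals hg₀ (hg.mono_set (by
        rw [uIcc_of_le hmb, uIcc_of_le hb]; exact Icc_subset_Icc_left hm)),
      intervalIntegral.integral_sub hf₀ hg₀]
    ring
  have hcommon : |∫ t in 0..m, f t - g t| ≤ L * m := by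
    have hm_null : ∀ᵐ t : ℝ, t ≠ m := by simp [ae_iff, measure_singleton]
    have := intervalIntegral.norm_integral_le_of_norm_le_const_ae (a := 0) (b := m)
      (C := L) (f := fun t => f t - g t) (by
        filter_upwards [hm_null] with t htm ht
        rw [uIoc_of_le hm] at ht
        exact hfg t ⟨ht.1, lt_of_le_of_ne ht.2 htm⟩)
    rwa [sub_zero, abs_of_nonneg hm] at this
  have htail {k : ℝ → ℝ} {c : ℝ} (hmc : m ≤ c) (hkM : ∀ t ∈ Ioc 0 c, |k t| ≤ M) :
      |∫ t in m..c, k t| ≤ M * (c - m) := by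
    have := intervalIntegral.norm_integral_le_of_norm_le_const (a := m) (b := c) (C := M)
      (f := k) fun t ht => by
        rw [uIoc_of_le hmc] at ht
        exact hkM t ⟨hm.trans_lt ht.1, ht.2⟩
    rwa [abs_of_nonneg (sub_nonneg.mpr hmc)] at this
  have htails : (a - m) + (b - m) = |a - b| := by
    rcases le_total a b with h | h
    · simp [m, min_eq_left h, abs_of_nonpos (sub_nonpos.mpr h)]
    · simp [m, min_eq_right h, abs_of_nonneg (sub_nonneg.mpr h)]
  calc |(∫ t in 0..a, f t) - ∫ t in 0..b, g t|
      ≤ |∫ t in 0..m, f t - g t| + (|∫ t in m..a, f t| + |∫ t in m..b, g t|) := by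
        rw [hsplit]
        exact (abs_add_le _ _).trans (by gcongr; exact abs_sub _ _)
    _ ≤ L * m + (M * (a - m) + M * (b - m)) := by
        gcongr
        exacts [htail hma hfM, htail hmb hgM]
    _ = L * m + M * |a - b| := by rw [← htails]; ring

lemma intervalIntegrable_of_abs_le {f : ℝ → ℝ} {M b : ℝ}
    (hf : AEStronglyMeasurable f (volume.restrict (Ioi 0))) (hfM : ∀ t, 0 < t → |f t| ≤ M)
    (hb : 0 ≤ b) : IntervalIntegrable f volume 0 b := by
  rw [intervalIntegrable_iff_integrableOn_Ioc_of_le hb]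
  exact IntegrableOn.of_bound measure_Ioc_lt_top (hf.mono_set Ioc_subset_Ioi_self) M
    ((ae_restrict_mem measurableSet_Ioc).mono fun t ht => hfM t ht.1)

-- No measurability of `g` is needed: where `g` is integrable on `(-t, 0]` the integral is
-- monotone in `t`, and this happens on a lower set of `t`, outside of which it is `0`.
lemma measurable_integral_Ioc_neg {g : ℝ → ℝ} (hg : ∀ u, 0 ≤ g u) :
    Measurable fun t => ∫ u in Ioc (-t) 0, g u := by
  set A : Set ℝ := {t | IntegrableOn g (Ioc (-t) 0)}
  have hA : IsLowerSet A := fun t t' htt' ht =>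
    ht.mono_set (Ioc_subset_Ioc_left (neg_le_neg htt'))
  have hL : Monotone fun t => ∫⁻ u in Ioc (-t) 0, ENNReal.ofReal (g u) := fun t t' htt' =>
    lintegral_mono_set (Ioc_subset_Ioc_left (neg_le_neg htt'))
  have heq : (fun t => ∫ u in Ioc (-t) 0, g u) =
      A.indicator fun t => (∫⁻ u in Ioc (-t) 0, ENNReal.ofReal (g u)).toReal := by
    ext t
    by_cases ht : t ∈ A
    · rw [indicator_of_mem ht,
        integral_eq_lintegral_of_nonneg_ae (.of_forall hg) ht.aestronglyMeasurable]
    · rw [indicator_of_notMem ht, integral_undef ht]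
  rw [heq]
  exact (ENNReal.measurable_toReal.comp hL.measurable).indicator
    hA.ordConnected.measurableSet

section ReverseFlowCurves

variable {E : Set (Rd d)} {Φ DΦ : Rd d → ℝ → Rd d}

lemma tminusR_nonneg (w : Rd d) : 0 ≤ tminusR Φ E w :=
  Real.sInf_nonneg fun _ ht => ht.1.le

lemma flow_neg_mem_of_Ttube_subset {x w : Rd d} {ρ t : ℝ} (htube : Ttube Φ E DΦ x ρ ⊆ E)
    (hw : w ∈ Dxrho DΦ x ρ) (ht₀ : 0 ≤ t) (ht : t < tminusR Φ E w) : Φ w (-t) ∈ E :=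
  htube (mem_biUnion hw ⟨t, ⟨ht₀, ht⟩, rfl⟩)

lemma ofReal_lt_tplus_flow_neg (hE : IsOpen E)
    (hflow : ∀ (y : Rd d) (t u : ℝ), Φ y (t + u) = Φ (Φ y t) u) {w : Rd d} {t : ℝ}
    (hcont : ContinuousAt (Φ w) 0) (ht : 0 ≤ t) (hw : ∀ u ∈ Icc 0 t, Φ w (-u) ∈ E) :
    ENNReal.ofReal t < tplus Φ E (Φ w (-t)) := by
  have hw₀ : Φ w 0 ∈ E := by simpa using hw 0 ⟨le_rfl, ht⟩
  obtain ⟨ε, hε, hball⟩ := Metric.mem_nhds_iff.mp (hcont.preimage_mem_nhds (hE.mem_nhds hw₀))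
  -- `Φ(Φ(w,-t), u) = Φ(w, u - t)` stays in `E` while `u - t < ε`, so it meets `∂E` only later.
  have hexit : ∀ u, 0 < u → Φ (Φ w (-t)) u ∈ frontier E → t + ε ≤ u := by
    intro u hu₀ hu
    by_contra! hlt
    rw [hE.frontier_eq, ← hflow] at hu
    refine hu.2 ?_
    rcases le_or_gt u t with hut | hut
    · rw [show -t + u = -(t - u) by ring]
      exact hw (t - u) ⟨by linarith, by linarith⟩
    · refine hball ?_
      rw [Metric.mem_ball, Real.dist_eq, sub_zero, abs_of_pos (by linarith)]
      linarith
  calc ENNReal.ofReal t < ENNReal.ofReal (t + ε) :=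
        (ENNReal.ofReal_lt_ofReal_iff (by linarith)).mpr (by linarith)
    _ ≤ tplus Φ E (Φ w (-t)) :=
        le_iInf fun u => ENNReal.ofReal_le_ofReal (hexit u.1 u.2.1 u.2.2)

lemma ofReal_lt_tplus_of_Ttube_subset (hE : IsOpen E)
    (hflow : ∀ (y : Rd d) (t u : ℝ), Φ y (t + u) = Φ (Φ y t) u) {x w : Rd d} {ρ t : ℝ}
    (hcont : ContinuousAt (Φ w) 0) (htube : Ttube Φ E DΦ x ρ ⊆ E) (hw : w ∈ Dxrho DΦ x ρ)
    (ht₀ : 0 ≤ t) (ht : t < tminusR Φ E w) : ENNReal.ofReal t < tplus Φ E (Φ w (-t)) :=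
  ofReal_lt_tplus_flow_neg hE hflow hcont ht₀ fun _ hu =>
    flow_neg_mem_of_Ttube_subset htube hw hu.1 (hu.2.trans_lt ht)

lemma exists_abs_tminusR_sub_le (hE : IsOpen E) (hflow0 : ∀ y, Φ y 0 = y)
    (htm_lip : ∃ L, 0 ≤ L ∧ ∀ x ∈ E, ∀ y ∈ E, |tminusR Φ E x - tminusR Φ E y| ≤ L * ‖x - y‖)
    {x : Rd d} (hx : x ∈ E) {ρ : ℝ} (htube : Ttube Φ E DΦ x ρ ⊆ E) :
    ∃ L, 0 ≤ L ∧ ∀ y ∈ Dxrho DΦ x ρ,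
      |tminusR Φ E y - tminusR Φ E x| ≤ L * ‖x - y‖ := by
  obtain ⟨Lt, hLt, htm⟩ := htm_lip
  obtain ⟨r, hr, hball⟩ := Metric.isOpen_iff.mp hE x hx
  have hx₀ := tminusR_nonneg (Φ := Φ) (E := E) x
  refine ⟨Lt + tminusR Φ E x / r, by positivity, fun y hy => ?_⟩
  by_cases hyE : y ∈ E
  · rw [abs_sub_comm]
    exact (htm x hx y hyE).trans (by gcongr; exact le_add_of_nonneg_right (by positivity))
  -- Off `E` the curve `C_y` is empty, and `y` is at distance at least `r` from `x`.
  have hy₀ : tminusR Φ E y = 0 := by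
    refine le_antisymm (not_lt.mp fun hpos => hyE ?_) (tminusR_nonneg y)
    simpa [hflow0] using flow_neg_mem_of_Ttube_subset htube hy le_rfl hpos
  have hr_le : r ≤ ‖x - y‖ := by
    by_contra! hlt
    exact hyE (hball (by rwa [Metric.mem_ball, dist_comm, dist_eq_norm]))
  calc |tminusR Φ E y - tminusR Φ E x| = tminusR Φ E x / r * r := by
        rw [hy₀, zero_sub, abs_neg, abs_of_nonneg hx₀, div_mul_cancel₀ _ hr.ne']
    _ ≤ (Lt + tminusR Φ E x / r) * ‖x - y‖ := by
        gcongr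
        exact le_add_of_nonneg_left hLt

def lineIntegrand (Φ DΦ : Rd d → ℝ → Rd d) (g : Rd d → ℝ → ℝ) (w : Rd d) (t : ℝ) : ℝ :=
  g (Φ w (-t)) t * ‖DΦ w (-t)‖

lemma abs_lineIntegrand_le {g : Rd d → ℝ → ℝ} {C CD : ℝ} (hC : ∀ ξ t, 0 < t → |g ξ t| ≤ C)
    (hCD : ∀ (x : Rd d) (t : ℝ), ‖DΦ x t‖ ≤ CD) (w : Rd d) {t : ℝ} (ht : 0 < t) :
    |lineIntegrand Φ DΦ g w t| ≤ C * CD := by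
  rw [lineIntegrand, abs_mul, abs_norm]
  exact mul_le_mul (hC _ _ ht) (hCD _ _) (norm_nonneg _) ((abs_nonneg _).trans (hC w t ht))

lemma intervalIntegrable_lineIntegrand (hDΦ : ∀ (y : Rd d) (t : ℝ), HasDerivAt (Φ y) (DΦ y t) t)
    {g : Rd d → ℝ → ℝ} {C CD : ℝ} (w : Rd d)
    (hg : AEStronglyMeasurable (fun t => g (Φ w (-t)) t) (volume.restrict (Ioi 0)))
    (hC : ∀ ξ t, 0 < t → |g ξ t| ≤ C) (hCD : ∀ (x : Rd d) (t : ℝ), ‖DΦ x t‖ ≤ CD) {b : ℝ}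
    (hb : 0 ≤ b) : IntervalIntegrable (lineIntegrand Φ DΦ g w) volume 0 b := by
  have hDΦw : DΦ w = deriv (Φ w) := funext fun t => (hDΦ w t).deriv.symm
  refine intervalIntegrable_of_abs_le ?_ (fun t ht => abs_lineIntegrand_le hC hCD w ht) hb
  rw [show lineIntegrand Φ DΦ g w = fun t => g (Φ w (-t)) t * ‖DΦ w (-t)‖ from rfl, hDΦw]
  exact hg.mul ((measurable_deriv _).comp measurable_neg).norm.aestronglyMeasurable

lemma abs_lineIntegrand_sub_le (hE : IsOpen E)
    (hflow : ∀ (y : Rd d) (t u : ℝ), Φ y (t + u) = Φ (Φ y t) u)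
    (hcont : ∀ y, ContinuousAt (Φ y) 0) {g : Rd d → ℝ → ℝ} {C L LΦ CD LD : ℝ}
    (hC : ∀ ξ t, 0 < t → |g ξ t| ≤ C) (hL : 0 ≤ L)
    (hg : ∀ ξ ∈ E, ∀ ξ' ∈ E, ∀ t, 0 < t →
      ENNReal.ofReal t < min (tplus Φ E ξ) (tplus Φ E ξ') → |g ξ t - g ξ' t| ≤ L * ‖ξ - ξ'‖)
    (hΦ : ∀ (t : ℝ) (x y : Rd d), ‖Φ x t - Φ y t‖ ≤ LΦ * ‖x - y‖)
    (hCD : ∀ (x : Rd d) (t : ℝ), ‖DΦ x t‖ ≤ CD)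
    (hDΦ : ∀ (t : ℝ) (x y : Rd d), ‖DΦ x t - DΦ y t‖ ≤ LD * ‖x - y‖)
    {x y w : Rd d} {ρ t : ℝ} (htube : Ttube Φ E DΦ x ρ ⊆ E)
    (hy : y ∈ Dxrho DΦ x ρ) (hw : w ∈ Dxrho DΦ x ρ) (ht : 0 < t)
    (hty : t < tminusR Φ E y) (htw : t < tminusR Φ E w) :
    |lineIntegrand Φ DΦ g y t - lineIntegrand Φ DΦ g w t| ≤
      (L * LΦ * CD + C * LD) * ‖y - w‖ := by
  have hgyw : |g (Φ y (-t)) t - g (Φ w (-t)) t| ≤ L * (LΦ * ‖y - w‖) :=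
    (hg _ (flow_neg_mem_of_Ttube_subset htube hy ht.le hty)
      _ (flow_neg_mem_of_Ttube_subset htube hw ht.le htw) t ht
      (lt_min (ofReal_lt_tplus_of_Ttube_subset hE hflow (hcont y) htube hy ht.le hty)
        (ofReal_lt_tplus_of_Ttube_subset hE hflow (hcont w) htube hw ht.le htw))).trans
      (by gcongr; exact hΦ _ _ _)
  calc |lineIntegrand Φ DΦ g y t - lineIntegrand Φ DΦ g w t|
      ≤ |g (Φ y (-t)) t - g (Φ w (-t)) t| * CD + C * |‖DΦ y (-t)‖ - ‖DΦ w (-t)‖| :=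
        abs_mul_sub_mul_le (hC _ _ ht) (by rw [abs_norm]; exact hCD _ _)
    _ ≤ L * (LΦ * ‖y - w‖) * CD + C * (LD * ‖y - w‖) := by
        gcongr
        · exact (norm_nonneg _).trans (hCD x 0)
        · exact (abs_nonneg _).trans (hC x 1 one_pos)
        · exact (abs_norm_sub_norm_le _ _).trans (hDΦ _ _ _)
    _ = (L * LΦ * CD + C * LD) * ‖y - w‖ := by ring

theorem exists_abs_lineIntegral_sub_le (hE : IsOpen E)
    (hflow : ∀ (y : Rd d) (t u : ℝ), Φ y (t + u) = Φ (Φ y t) u) (hflow0 : ∀ y, Φ y 0 = y)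
    (hDΦ : ∀ (y : Rd d) (t : ℝ), HasDerivAt (Φ y) (DΦ y t) t)
    (htm_lip : ∃ L, 0 ≤ L ∧ ∀ x ∈ E, ∀ y ∈ E, |tminusR Φ E x - tminusR Φ E y| ≤ L * ‖x - y‖)
    (hΦ_lip : ∃ L, 0 ≤ L ∧ ∀ (t : ℝ) (x y : Rd d), ‖Φ x t - Φ y t‖ ≤ L * ‖x - y‖)
    (hDΦ_bdd : ∃ C, ∀ (x : Rd d) (t : ℝ), ‖DΦ x t‖ ≤ C)
    (hDΦ_lip : ∃ L, 0 ≤ L ∧ ∀ (t : ℝ) (x y : Rd d), ‖DΦ x t - DΦ y t‖ ≤ L * ‖x - y‖)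
    {x : Rd d} (hx : x ∈ E) {ρ : ℝ} (hρ : 0 < ρ) (htube : Ttube Φ E DΦ x ρ ⊆ E)
    {g : Rd d → ℝ → ℝ}
    (hg_meas : ∀ w, AEStronglyMeasurable (fun t => g (Φ w (-t)) t) (volume.restrict (Ioi 0)))
    (hg_bdd : ∃ C, ∀ ξ t, 0 < t → |g ξ t| ≤ C)
    (hg_lip : ∃ L, 0 ≤ L ∧ ∀ ξ ∈ E, ∀ ξ' ∈ E, ∀ t, 0 < t →
      ENNReal.ofReal t < min (tplus Φ E ξ) (tplus Φ E ξ') → |g ξ t - g ξ' t| ≤ L * ‖ξ - ξ'‖) :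
    ∃ c, 0 ≤ c ∧ ∀ y ∈ Dxrho DΦ x ρ,
      |lineIntegral Φ DΦ E y g - lineIntegral Φ DΦ E x g| ≤ c * ‖x - y‖ := by
  obtain ⟨C, hC⟩ := hg_bdd
  obtain ⟨L, hL, hg⟩ := hg_lip
  obtain ⟨LΦ, hLΦ, hΦ⟩ := hΦ_lip
  obtain ⟨CD, hCD⟩ := hDΦ_bdd
  obtain ⟨LD, hLD, hD⟩ := hDΦ_lip
  obtain ⟨Lt, hLt, htm⟩ := exists_abs_tminusR_sub_le hE hflow0 htm_lip hx htube
  have hC₀ : 0 ≤ C := (abs_nonneg _).trans (hC x 1 one_pos)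
  have hCD₀ : 0 ≤ CD := (norm_nonneg _).trans (hCD x 0)
  have hx₀ := tminusR_nonneg (Φ := Φ) (E := E) x
  have hxD : x ∈ Dxrho DΦ x ρ := ⟨Metric.mem_ball_self hρ, by simp⟩
  set Lh := L * LΦ * CD + C * LD
  refine ⟨Lh * tminusR Φ E x + C * CD * Lt, by positivity, fun y hy => ?_⟩
  calc |lineIntegral Φ DΦ E y g - lineIntegral Φ DΦ E x g|
      ≤ Lh * ‖x - y‖ * min (tminusR Φ E y) (tminusR Φ E x) +
          C * CD * |tminusR Φ E y - tminusR Φ E x| := by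
        refine abs_intervalIntegral_sub_le (tminusR_nonneg y) hx₀
          (intervalIntegrable_lineIntegrand hDΦ y (hg_meas y) hC hCD (tminusR_nonneg y))
          (intervalIntegrable_lineIntegrand hDΦ x (hg_meas x) hC hCD hx₀)
          (fun t ht => abs_lineIntegrand_le hC hCD y ht.1)
          (fun t ht => abs_lineIntegrand_le hC hCD x ht.1) fun t ⟨ht, htyx⟩ => ?_
        rw [norm_sub_rev x y]
        exact abs_lineIntegrand_sub_le hE hflow (fun w => (hDΦ w 0).continuousAt) hC hL hg hΦ
          hCD hD htube hy hxD ht (htyx.trans_le (min_le_left _ _))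
          (htyx.trans_le (min_le_right _ _))
    _ ≤ Lh * ‖x - y‖ * tminusR Φ E x + C * CD * (Lt * ‖x - y‖) := by
        gcongr
        exacts [min_le_right _ _, htm y hy]
    _ = (Lh * tminusR Φ E x + C * CD * Lt) * ‖x - y‖ := by ring

end ReverseFlowCurves

section Integrand

lemma Gfun_nonneg (Φ : Rd d → ℝ → Rd d) (lam : Rd d → ℝ) (ξ : Rd d) (t : ℝ) :
    0 ≤ Gfun Φ lam ξ t :=
  (exp_pos _).le

lemma abs_Gfun_le_one {Φ : Rd d → ℝ → Rd d} {lam : Rd d → ℝ} (hlam : ∀ y, 0 ≤ lam y)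
    (ξ : Rd d) {t : ℝ} (ht : 0 ≤ t) : |Gfun Φ lam ξ t| ≤ 1 := by
  rw [abs_of_nonneg (Gfun_nonneg Φ lam ξ t)]
  exact exp_le_one_iff.mpr (neg_nonpos.mpr (intervalIntegral.integral_nonneg ht fun _ _ => hlam _))

lemma Gfun_flow_neg {Φ : Rd d → ℝ → Rd d} (lam : Rd d → ℝ)
    (hflow : ∀ (y : Rd d) (t u : ℝ), Φ y (t + u) = Φ (Φ y t) u) (w : Rd d) {t : ℝ}
    (ht : 0 ≤ t) : Gfun Φ lam (Φ w (-t)) t = exp (-∫ u in Ioc (-t) 0, lam (Φ w u)) := by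
  have hshift : (∫ s in (0 : ℝ)..t, lam (Φ (Φ w (-t)) s)) = ∫ u in (-t)..0, lam (Φ w u) := by
    simp_rw [← hflow, neg_add_eq_sub]
    rw [intervalIntegral.integral_comp_sub_right (fun u => lam (Φ w u)) t]
    simp
  rw [Gfun, hshift, intervalIntegral.integral_of_le (neg_nonpos.mpr ht)]

lemma aestronglyMeasurable_Gfun_flow_neg {Φ : Rd d → ℝ → Rd d} {lam : Rd d → ℝ}
    (hflow : ∀ (y : Rd d) (t u : ℝ), Φ y (t + u) = Φ (Φ y t) u) (hlam : ∀ y, 0 ≤ lam y)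
    (w : Rd d) :
    AEStronglyMeasurable (fun t => Gfun Φ lam (Φ w (-t)) t) (volume.restrict (Ioi 0)) := by
  refine ((measurable_integral_Ioc_neg fun u => hlam (Φ w u)).neg.exp).aestronglyMeasurable.congr ?_
  filter_upwards [ae_restrict_mem measurableSet_Ioi] with t ht
  exact (Gfun_flow_neg lam hflow w (le_of_lt ht)).symm

lemma abs_ite_one_zero_le_one (p : Prop) [Decidable p] : |if p then (1 : ℝ) else 0| ≤ 1 := by
  split_ifs <;> simp

variable {Kd : Rd d → ℝ} {v0 α : ℝ} {z : ℕ → Rd d} {s : ℕ → ℝ} {n : ℕ}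

lemma measurable_GhatData (hKd : Measurable Kd) :
    Measurable fun p : Rd d × ℝ => GhatData Kd v0 α z s n p.1 p.2 := by
  unfold GhatData
  refine Measurable.const_mul (Finset.measurable_sum _ fun i _ => ?_) _
  refine ((hKd.comp ?_).const_mul _).mul ?_
  · fun_prop
  · exact Measurable.ite (measurableSet_lt measurable_snd measurable_const)
      measurable_const measurable_const

lemma abs_GhatData_le {CK : ℝ} (hK : ∀ u, |Kd u| ≤ CK) (ξ : Rd d) (t : ℝ) :
    |GhatData Kd v0 α z s n ξ t| ≤
      |(n : ℝ)⁻¹| * ∑ i ∈ Finset.range n, |(vband v0 α i ^ d)⁻¹| * CK := by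
  rw [GhatData, abs_mul]
  gcongr
  refine (Finset.abs_sum_le_sum_abs _ _).trans (Finset.sum_le_sum fun i _ => ?_)
  have hCK : 0 ≤ CK := (abs_nonneg _).trans (hK 0)
  rw [abs_mul, abs_mul, ← mul_one (_ * CK)]
  exact mul_le_mul (mul_le_mul_of_nonneg_left (hK _) (abs_nonneg _)) (abs_ite_one_zero_le_one _)
    (abs_nonneg _) (by positivity)

lemma abs_GhatData_sub_le {LK : ℝ} (hK : ∀ u v, |Kd u - Kd v| ≤ LK * ‖u - v‖)
    (ξ ξ' : Rd d) (t : ℝ) :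
    |GhatData Kd v0 α z s n ξ t - GhatData Kd v0 α z s n ξ' t| ≤
      (|(n : ℝ)⁻¹| * ∑ i ∈ Finset.range n, |(vband v0 α i ^ d)⁻¹| * (LK * |(vband v0 α i)⁻¹|)) *
        ‖ξ - ξ'‖ := by
  rw [GhatData, GhatData, ← mul_sub, ← Finset.sum_sub_distrib, abs_mul, mul_assoc, Finset.sum_mul]
  gcongr
  refine (Finset.abs_sum_le_sum_abs _ _).trans (Finset.sum_le_sum fun i _ => ?_)
  set c := (vband v0 α i)⁻¹
  have hscale : ‖c • (z i - ξ) - c • (z i - ξ')‖ = |c| * ‖ξ - ξ'‖ := by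
    rw [← smul_sub, norm_smul, Real.norm_eq_abs, sub_sub_sub_cancel_left, norm_sub_rev]
  have hKi : |Kd (c • (z i - ξ)) - Kd (c • (z i - ξ'))| ≤ LK * (|c| * ‖ξ - ξ'‖) :=
    hscale ▸ hK _ _
  rw [← sub_mul, ← mul_sub, abs_mul, abs_mul]
  calc |(vband v0 α i ^ d)⁻¹| * |Kd (c • (z i - ξ)) - Kd (c • (z i - ξ'))| *
        |if t < s i then (1 : ℝ) else 0|
      ≤ |(vband v0 α i ^ d)⁻¹| * (LK * (|c| * ‖ξ - ξ'‖)) * 1 :=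
        mul_le_mul (mul_le_mul_of_nonneg_left hKi (abs_nonneg _)) (abs_ite_one_zero_le_one _)
          (abs_nonneg _) (mul_nonneg (abs_nonneg _) ((abs_nonneg _).trans hKi))
    _ = |(vband v0 α i ^ d)⁻¹| * (LK * |c|) * ‖ξ - ξ'‖ := by ring

variable {E : Set (Rd d)} {Φ : Rd d → ℝ → Rd d} {lam nu : Rd d → ℝ}

lemma aestronglyMeasurable_GhatData_mul_Gfun_mul
    (hflow : ∀ (y : Rd d) (t u : ℝ), Φ y (t + u) = Φ (Φ y t) u) (hlam : ∀ y, 0 ≤ lam y)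
    (hKd : Measurable Kd) (hnu : Measurable nu) {w : Rd d} (hΦ : Continuous (Φ w)) :
    AEStronglyMeasurable
      (fun t => GhatData Kd v0 α z s n (Φ w (-t)) t * Gfun Φ lam (Φ w (-t)) t * nu (Φ w (-t)))
      (volume.restrict (Ioi 0)) := by
  have hcurve : Measurable fun t => Φ w (-t) := (hΦ.comp continuous_neg).measurable
  exact (((measurable_GhatData hKd).comp (hcurve.prodMk measurable_id)).aestronglyMeasurable.mul
    (aestronglyMeasurable_Gfun_flow_neg hflow hlam w)).mul (hnu.comp hcurve).aestronglyMeasurable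

lemma exists_abs_GhatData_mul_Gfun_mul_le (hlam : ∀ y, 0 ≤ lam y)
    (hKd : ∃ C, ∀ u, |Kd u| ≤ C) (hnu : ∃ C, ∀ y, |nu y| ≤ C) :
    ∃ C, ∀ ξ t, 0 < t → |GhatData Kd v0 α z s n ξ t * Gfun Φ lam ξ t * nu ξ| ≤ C := by
  obtain ⟨CK, hCK⟩ := hKd
  obtain ⟨Cν, hCν⟩ := hnu
  refine ⟨(|(n : ℝ)⁻¹| * ∑ i ∈ Finset.range n, |(vband v0 α i ^ d)⁻¹| * CK) * 1 * Cν,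
    fun ξ t ht => ?_⟩
  rw [abs_mul, abs_mul]
  have hCK₀ : 0 ≤ CK := (abs_nonneg _).trans (hCK 0)
  gcongr
  exacts [abs_GhatData_le hCK ξ t, abs_Gfun_le_one hlam ξ ht.le, hCν ξ]

lemma exists_lipschitz_GhatData_mul_Gfun_mul (hlam : ∀ y, 0 ≤ lam y)
    (hKd_bdd : ∃ C, ∀ u, |Kd u| ≤ C)
    (hKd_lip : ∃ L, 0 ≤ L ∧ ∀ u v, |Kd u - Kd v| ≤ L * ‖u - v‖)
    (hnu_bdd : ∃ C, ∀ y, |nu y| ≤ C)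
    (hnu_lip : ∃ L, 0 ≤ L ∧ ∀ x y : Rd d, |nu x - nu y| ≤ L * ‖x - y‖)
    (hG_lip : ∃ L, 0 ≤ L ∧ ∀ x ∈ E, ∀ y ∈ E, ∀ t : ℝ, 0 < t →
      ENNReal.ofReal t < min (tplus Φ E x) (tplus Φ E y) →
      |Gfun Φ lam x t - Gfun Φ lam y t| ≤ L * ‖x - y‖) :
    ∃ L, 0 ≤ L ∧ ∀ ξ ∈ E, ∀ ξ' ∈ E, ∀ t, 0 < t →
      ENNReal.ofReal t < min (tplus Φ E ξ) (tplus Φ E ξ') →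
      |GhatData Kd v0 α z s n ξ t * Gfun Φ lam ξ t * nu ξ -
        GhatData Kd v0 α z s n ξ' t * Gfun Φ lam ξ' t * nu ξ'| ≤ L * ‖ξ - ξ'‖ := by
  obtain ⟨CK, hCK⟩ := hKd_bdd
  obtain ⟨LK, hLK, hKl⟩ := hKd_lip
  obtain ⟨Cν, hCν⟩ := hnu_bdd
  obtain ⟨Lν, hLν, hνl⟩ := hnu_lip
  obtain ⟨LG, hLG, hGl⟩ := hG_lip
  have hCK₀ : 0 ≤ CK := (abs_nonneg _).trans (hCK 0)
  have hCν₀ : 0 ≤ Cν := (abs_nonneg _).trans (hCν 0)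
  set CĜ := |(n : ℝ)⁻¹| * ∑ i ∈ Finset.range n, |(vband v0 α i ^ d)⁻¹| * CK
  set LĜ := |(n : ℝ)⁻¹| * ∑ i ∈ Finset.range n, |(vband v0 α i ^ d)⁻¹| * (LK * |(vband v0 α i)⁻¹|)
  have hĜ := abs_GhatData_le (v0 := v0) (α := α) (z := z) (s := s) (n := n) hCK
  refine ⟨(LĜ + CĜ * LG) * Cν + CĜ * Lν, by positivity, fun ξ hξ ξ' hξ' t ht htT => ?_⟩
  have hĜG' : |GhatData Kd v0 α z s n ξ' t * Gfun Φ lam ξ' t| ≤ CĜ * 1 := by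
    rw [abs_mul]; gcongr; exacts [hĜ ξ' t, abs_Gfun_le_one hlam ξ' ht.le]
  calc _ ≤ |GhatData Kd v0 α z s n ξ t * Gfun Φ lam ξ t -
          GhatData Kd v0 α z s n ξ' t * Gfun Φ lam ξ' t| * Cν + CĜ * 1 * |nu ξ - nu ξ'| :=
        abs_mul_sub_mul_le hĜG' (hCν ξ)
    _ ≤ (|GhatData Kd v0 α z s n ξ t - GhatData Kd v0 α z s n ξ' t| * 1 +
          CĜ * |Gfun Φ lam ξ t - Gfun Φ lam ξ' t|) * Cν + CĜ * 1 * |nu ξ - nu ξ'| := by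
        gcongr
        exact abs_mul_sub_mul_le (hĜ ξ' t) (abs_Gfun_le_one hlam ξ ht.le)
    _ ≤ (LĜ * ‖ξ - ξ'‖ * 1 + CĜ * (LG * ‖ξ - ξ'‖)) * Cν + CĜ * 1 * (Lν * ‖ξ - ξ'‖) := by
        gcongr
        exacts [abs_GhatData_sub_le hKl ξ ξ' t, hGl ξ hξ ξ' hξ' t ht htT, hνl ξ ξ']
    _ = ((LĜ + CĜ * LG) * Cν + CĜ * Lν) * ‖ξ - ξ'‖ := by ring

end Integrand

theorem stmt12_general {d : ℕ} (E : Set (Rd d)) (Φ DΦ : Rd d → ℝ → Rd d)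
    (lam : Rd d → ℝ) (Q : Rd d → Rd d → ℝ) (nu : Rd d → ℝ)
    (Kd : Rd d → ℝ) (K1 : ℝ → ℝ) (δ v0 α : ℝ)
    (hE : IsOpen E)
    (hflow : ∀ (y : Rd d) (t u : ℝ), Φ y (t + u) = Φ (Φ y t) u)
    (hflow0 : ∀ y, Φ y 0 = y)
    (hDΦ : ∀ (y : Rd d) (t : ℝ), HasDerivAt (Φ y) (DΦ y t) t)
    (hlam : ∀ y, 0 ≤ lam y)
    (hA2 : RegularityA2 Φ lam Q E) (hA4 : RegularityA4 Φ DΦ E nu)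
    (hK : KernelPair Kd K1 δ)
    (x : Rd d) (hx : x ∈ E) (ρ : ℝ) (hρ : 0 < ρ)
    (htube : Ttube Φ E DΦ x ρ ⊆ E)
    (n : ℕ) (z : ℕ → Rd d) (s : ℕ → ℝ) :
    ∃ c : ℝ, 0 ≤ c ∧ ∀ y ∈ Dxrho DΦ x ρ,
      |lineIntegral Φ DΦ E y
          (fun ξ t => GhatData Kd v0 α z s n ξ t * Gfun Φ lam ξ t * nu ξ) -
        lineIntegral Φ DΦ E x
          (fun ξ t => GhatData Kd v0 α z s n ξ t * Gfun Φ lam ξ t * nu ξ)| ≤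
        c * ‖x - y‖ := by
  obtain ⟨hnu_bdd, hnu_lip, htm_lip, hΦ_lip, hDΦ_bdd, hDΦ_lip⟩ := hA4
  have hKd_bdd : ∃ C, ∀ u, |Kd u| ≤ C := by
    obtain ⟨C, hC⟩ := hK.d_bdd
    exact ⟨C, fun u => (abs_of_nonneg (hK.d_nonneg u)).trans_le (hC u)⟩
  have hnu_cont : Continuous nu := by
    obtain ⟨L, -, hL⟩ := hnu_lip
    exact (LipschitzWith.of_dist_le' (K := L) fun a b => by
      simpa [Real.dist_eq, dist_eq_norm] using hL a b).continuous
  refine exists_abs_lineIntegral_sub_le hE hflow hflow0 hDΦ htm_lip hΦ_lip hDΦ_bdd hDΦ_lip hx hρ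
    htube (fun w => ?_) (exists_abs_GhatData_mul_Gfun_mul_le hlam hKd_bdd hnu_bdd)
    (exists_lipschitz_GhatData_mul_Gfun_mul hlam hKd_bdd hK.d_lip hnu_bdd hnu_lip hA2.G_lip)
  exact aestronglyMeasurable_GhatData_mul_Gfun_mul hflow hlam hK.d_meas hnu_cont.measurable
    (continuous_iff_continuousAt.mpr fun t => (hDΦ w t).continuousAt)

theorem stmt12 {d : ℕ} (hd : 1 ≤ d) (E : Set (Rd d)) (Φ DΦ : Rd d → ℝ → Rd d)
    (lam : Rd d → ℝ) (Q : Rd d → Rd d → ℝ) (nu : Rd d → ℝ)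
    (Kd : Rd d → ℝ) (K1 : ℝ → ℝ) (δ v0 α : ℝ)
    (hE : IsOpen E)
    (hflow : ∀ (y : Rd d) (t u : ℝ), Φ y (t + u) = Φ (Φ y t) u)
    (hflow0 : ∀ y, Φ y 0 = y)
    (hDΦ : ∀ (y : Rd d) (t : ℝ), HasDerivAt (Φ y) (DΦ y t) t)
    (hlam : ∀ y, 0 ≤ lam y)
    (hA2 : RegularityA2 Φ lam Q E) (hA4 : RegularityA4 Φ DΦ E nu)
    (hdiffeo : ReverseFlowDiffeo Φ DΦ E) (hK : KernelPair Kd K1 δ)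
    (hv0 : 0 < v0) (hα : 0 < α)
    (x : Rd d) (hx : x ∈ E) (ρ : ℝ) (hρ : 0 < ρ)
    (htube : Ttube Φ E DΦ x ρ ⊆ E)
    (n : ℕ) (hn : 1 ≤ n) (z : ℕ → Rd d) (s : ℕ → ℝ)
    (hdata : ∀ i < n, (z i, s i) ∈ Fset Φ E) :
    ∃ c : ℝ, 0 ≤ c ∧ ∀ y ∈ Dxrho DΦ x ρ,
      |lineIntegral Φ DΦ E y
          (fun ξ t => GhatData Kd v0 α z s n ξ t * Gfun Φ lam ξ t * nu ξ) -
        lineIntegral Φ DΦ E x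
          (fun ξ t => GhatData Kd v0 α z s n ξ t * Gfun Φ lam ξ t * nu ξ)| ≤
        c * ‖x - y‖ :=
  stmt12_general E Φ DΦ lam Q nu Kd K1 δ v0 α hE hflow hflow0 hDΦ hlam hA2 hA4 hK x hx ρ hρ htube n
    z s
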